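/- arXiv:1007.3021 — 7 statements merged into one kernel-verified Lean document; each statement's English description precedes it below -/
import Mathlib

section
/- Let S be a language over a finite alphabet Σ, and let Δ = {(x,n) ∈ Σ* × ℕ : |x| ≤ n}. Then S is in REG/n if and only if there exists an equivalence relation ≡_S on Δ such that (a) the quotient Δ/≡_S has only finitely many equivalence classes, and (b) for every n ∈ ℕ and all strings x,y ∈ Σ* with |x| = |y| ≤ n: (x,n) ≡_S (y,n) if and only if for every string z with |xz| = n, xz ∈ S ↔ yz ∈ S. -/
open scoped BigOperators

/-- A rational one-way probabilistic finite automaton over alphabet `Λ`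
(with endmarker matrices `matC` for ¢ and `matD` for $). -/
structure PFA (Λ : Type) where
  Q : Type
  fin : Fintype Q
  dec : DecidableEq Q
  start : Q
  final : Finset Q
  matC : Matrix Q Q ℚ
  matD : Matrix Q Q ℚ
  mat : Λ → Matrix Q Q ℚ
  nonnegC : ∀ i j, 0 ≤ matC i j
  nonnegD : ∀ i j, 0 ≤ matD i j
  nonnegMat : ∀ σ i j, 0 ≤ mat σ i j
  rowC : ∀ i, ∑ j ∈ fin.elems, matC i j = 1
  rowD : ∀ i, ∑ j ∈ fin.elems, matD i j = 1
  rowMat : ∀ σ i, ∑ j ∈ fin.elems, mat σ i j = 1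

/-- Acceptance probability of a 1pfa on an input string. -/
def PFA.accProb {Λ : Type} (M : PFA Λ) (x : List Λ) : ℚ :=
  letI := M.fin
  letI := M.dec
  ∑ q ∈ M.final,
    (Matrix.vecMul
      (x.foldl (fun v σ => Matrix.vecMul v (M.mat σ))
        (Matrix.vecMul (Pi.single M.start 1) M.matC))
      M.matD) q

/-- `D` is a probability distribution on `Γ^n`. -/
def IsDist {Γ : Type} [Fintype Γ] {n : ℕ} (D : List.Vector Γ n → ℝ) : Prop :=
  (∀ y, 0 ≤ D y) ∧ ∑ y, D y = 1

open Classical in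
/-- Probability, under randomized advice `D`, that the track string `[x//y]` lies in `L`. -/
noncomputable def randAccProb {Alp Γ : Type} [Fintype Γ] (L : Set (List (Alp × Γ)))
    {n : ℕ} (D : List.Vector Γ n → ℝ) (x : List Alp) : ℝ :=
  ∑ y : List.Vector Γ n, if x.zip y.toList ∈ L then D y else 0

/-- `S ∈ REG/n`. -/
def InREGn {Alp : Type} (S : Set (List Alp)) : Prop :=
  ∃ (Γ : Type) (_ : Fintype Γ) (h : ℕ → List Γ), (∀ n, (h n).length = n) ∧
    ∃ (Q : Type) (_ : Fintype Q) (M : DFA (Alp × Γ) Q),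
      ∀ x : List Alp, x ∈ S ↔ x.zip (h x.length) ∈ M.accepts

/-- `S ∈ REG/Rn` (bounded error, randomized advice). -/
def InREGRn {Alp : Type} (S : Set (List Alp)) : Prop :=
  ∃ (Γ : Type) (iΓ : Fintype Γ),
    letI := iΓ
    ∃ (Q : Type) (_ : Fintype Q) (M : DFA (Alp × Γ) Q) (ε : ℝ),
      0 ≤ ε ∧ ε < 1 / 2 ∧
        ∃ D : (n : ℕ) → List.Vector Γ n → ℝ, (∀ n, IsDist (D n)) ∧
          ∀ (n : ℕ) (x : List Alp), x.length = n →
            (x ∈ S → 1 - ε ≤ randAccProb M.accepts (D n) x) ∧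
            (x ∉ S → randAccProb M.accepts (D n) x ≤ ε)

/-- `S ∈ CFL/n`. -/
def InCFLn {Alp : Type} (S : Set (List Alp)) : Prop :=
  ∃ (Γ : Type) (_ : Fintype Γ) (h : ℕ → List Γ), (∀ n, (h n).length = n) ∧
    ∃ L : Language (Alp × Γ), L.IsContextFree ∧
      ∀ x : List Alp, x ∈ S ↔ x.zip (h x.length) ∈ L

/-- `S ∈ CFL/Rn` (bounded error, randomized advice). -/
def InCFLRn {Alp : Type} (S : Set (List Alp)) : Prop :=
  ∃ (Γ : Type) (iΓ : Fintype Γ),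
    letI := iΓ
    ∃ (L : Language (Alp × Γ)), L.IsContextFree ∧
      ∃ (ε : ℝ), 0 ≤ ε ∧ ε < 1 / 2 ∧
        ∃ D : (n : ℕ) → List.Vector Γ n → ℝ, (∀ n, IsDist (D n)) ∧
          ∀ (n : ℕ) (x : List Alp), x.length = n →
            (x ∈ S → 1 - ε ≤ randAccProb L (D n) x) ∧
            (x ∉ S → randAccProb L (D n) x ≤ ε)

/-- `A ∈ 1C=LIN/lin` via the paper's 1pfa characterization. -/
def InOneCeqLin {Alp : Type} (A : Set (List Alp)) : Prop :=
  ∃ (Γ : Type) (_ : Fintype Γ) (h : ℕ → List Γ), (∀ n, (h n).length = n) ∧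
    ∃ M : PFA (Alp × Γ),
      ∀ x : List Alp, x ∈ A ↔ M.accProb (x.zip (h x.length)) = 1 / 2

/-- `A ∈ 1PLIN/lin` via the paper's 1pfa characterization. -/
def InOnePLin {Alp : Type} (A : Set (List Alp)) : Prop :=
  ∃ (Γ : Type) (_ : Fintype Γ) (h : ℕ → List Γ), (∀ n, (h n).length = n) ∧
    ∃ M : PFA (Alp × Γ),
      ∀ x : List Alp, x ∈ A ↔ 1 / 2 < M.accProb (x.zip (h x.length))

open Classical in
/-- `(A, μ) ∈ aver-REG/n`. -/
def InAverREGn {Alp : Type} [Fintype Alp] (A : Set (List Alp))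
    (μ : (n : ℕ) → List.Vector Alp n → ℝ) : Prop :=
  ∃ (Γ : Type) (_ : Fintype Γ) (h : ℕ → List Γ), (∀ n, (h n).length = n) ∧
    ∃ (Q : Type) (_ : Fintype Q) (M : DFA (Alp × Γ) Q) (ε : ℝ),
      0 ≤ ε ∧ ε < 1 / 2 ∧
        ∀ n : ℕ, 1 - ε ≤ ∑ x : List.Vector Alp n,
          if (x.toList.zip (h n) ∈ M.accepts ↔ x.toList ∈ A) then μ n x else 0

/-- The language `Dup = {ww : w ∈ {0,1}*}`. -/
def Dup : Set (List Bool) := {z | ∃ w : List Bool, z = w ++ w}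

/-- The marked palindrome language `Pal_# = {w#w^R}` over the alphabet
`Option Bool` (with `none` playing the role of the marker `#`). -/
def PalHash : Set (List (Option Bool)) :=
  {z | ∃ w : List Bool, z = w.map some ++ none :: (w.reverse.map some)}

/-- Inner product (number of common `true` positions) of two bit strings. -/
def innerProd (u v : List Bool) : ℕ :=
  ((u.zip v).filter fun p => p.1 && p.2).length

/-- The language `IP_* = {axy : a ∈ {λ,0,1}, |x| = |y|, x^R ⊙ y ≡ 0 (mod 2)}`. -/
def IPstar : Language Bool :=
  {z | ∃ a x y : List Bool, (a = [] ∨ a = [false] ∨ a = [true]) ∧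
    z = a ++ x ++ y ∧ x.length = y.length ∧ innerProd x.reverse y % 2 = 0}

/-- A negligible function. -/
def Negligible (f : ℕ → ℝ) : Prop :=
  ∀ k : ℕ, 0 < k → ∃ N : ℕ, ∀ n ≥ N, f n ≤ 1 / (n : ℝ) ^ k

/-- `L` is `REG/n`-pseudorandom. -/
def RegPseudorandom {Alp : Type} [Fintype Alp] (L : Set (List Alp)) : Prop :=
  ∀ B : Set (List Alp), InREGn B →
    Negligible fun n =>
      |(((symmDiff B L) ∩ {x | x.length = n}).ncard : ℝ) /
        (Fintype.card Alp : ℝ) ^ n - 1 / 2|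

/-! If a DFA `M` with advice `h` recognises `S`, the state reached on `[x//h(n)]` determines
the class of `x` under the Nerode relation of `S` restricted to length `n`. Sending each pair
`(x, n)` to the set of states reached from its Nerode class therefore gives an equivalence with
values in the finite set `Set Q` that agrees with `≡_S`. Conversely, the classes of an equivalence
of finite index agreeing with `≡_S` serve as DFA states: the advice symbol at position `i` for
length `n` is the transition table on the classes of length-`i` prefixes, read off through a
representative of each class, together with a bit recording membership in `S`. -/

theorem List.zip_append_left_of_length_le {α β : Type*} (u z : List α) {w : List β}
    (hw : u.length ≤ w.length) :
    (u ++ z).zip w = u.zip w ++ z.zip (w.drop u.length) := by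
  conv_lhs => rw [← List.take_append_drop u.length w]
  rw [List.zip_append (by simp [hw]), List.zip_eq_zip_take_min (l₁ := u) (l₂ := w),
    Nat.min_eq_left hw, List.take_length]

theorem List.zip_append_singleton_of_length_lt {α β : Type*} (u : List α) (a : α) {w : List β}
    (hw : u.length < w.length) :
    (u ++ [a]).zip w = u.zip w ++ [(a, w[u.length])] := by
  rw [List.zip_append_left_of_length_le u [a] hw.le, List.drop_eq_getElem_cons hw]
  rfl

abbrev PrefixPair (α : Type) := {p : List α × ℕ // p.1.length ≤ p.2}

section Nerode

variable {α : Type*} (S : Set (List α))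

def NerodeAt (n : ℕ) (x y : List α) : Prop :=
  ∀ z, (x ++ z).length = n → (x ++ z ∈ S ↔ y ++ z ∈ S)

variable {S} {n : ℕ} {x y w : List α}

theorem NerodeAt.refl (n : ℕ) (x : List α) : NerodeAt S n x x := fun _ _ => Iff.rfl

theorem NerodeAt.symm (hxy : x.length = y.length) (h : NerodeAt S n x y) : NerodeAt S n y x :=
  fun z hz => (h z (by simpa [hxy] using hz)).symm

theorem NerodeAt.trans (hxy : x.length = y.length) (h₁ : NerodeAt S n x y)
    (h₂ : NerodeAt S n y w) : NerodeAt S n x w :=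
  fun z hz => (h₁ z hz).trans (h₂ z (by simpa [hxy] using hz))

theorem NerodeAt.append (h : NerodeAt S n x y) (u : List α) :
    NerodeAt S n (x ++ u) (y ++ u) := fun z hz => by
  simpa only [List.append_assoc] using h (u ++ z) (by simpa using hz)

theorem NerodeAt.mem_iff (h : NerodeAt S n x y) (hx : x.length = n) : x ∈ S ↔ y ∈ S := by
  simpa using h [] (by simpa using hx)

variable (S) in
def nerodeSetoid (n : ℕ) : Setoid (List α) where
  r x y := x.length = y.length ∧ NerodeAt S n x y
  iseqv :=
    { refl x := ⟨rfl, .refl n x⟩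
      symm := fun ⟨hl, h⟩ => ⟨hl.symm, h.symm hl⟩
      trans := fun ⟨hl₁, h₁⟩ ⟨hl₂, h₂⟩ => ⟨hl₁.trans hl₂, h₁.trans hl₁ h₂⟩ }

end Nerode

def AgreesWithNerodeAt {α : Type} (S : Set (List α)) (s : Setoid (PrefixPair α)) : Prop :=
  ∀ (n : ℕ) (x y : List α) (hx : x.length ≤ n) (hy : y.length ≤ n), x.length = y.length →
    (s ⟨(x, n), hx⟩ ⟨(y, n), hy⟩ ↔ NerodeAt S n x y)

theorem Setoid.image_setOf_eq_iff {α β : Type*} (r : Setoid α) (g : α → β) {a b : α}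
    (h : ∀ c, r b c → g a = g c → r a c) :
    g '' {c | r a c} = g '' {c | r b c} ↔ r a b := by
  refine ⟨fun himg => ?_, fun hab => ?_⟩
  · obtain ⟨c, hbc, hc⟩ : g a ∈ g '' {c | r b c} := himg ▸ ⟨a, r.refl a, rfl⟩
    exact r.trans (h c hbc hc.symm) (r.symm hbc)
  · rw [show {c | r a c} = {c | r b c} from
      Set.ext fun c => ⟨r.trans (r.symm hab), r.trans hab⟩]

section Forward

variable {α Γ Q : Type} {S : Set (List α)} {h : ℕ → List Γ} {M : DFA (α × Γ) Q}

theorem nerodeAt_of_eval_eq (hlen : ∀ n, (h n).length = n)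
    (hM : ∀ x : List α, x ∈ S ↔ x.zip (h x.length) ∈ M.accepts) {n : ℕ} {x y : List α}
    (hx : x.length ≤ n) (hxy : x.length = y.length)
    (heq : M.eval (x.zip (h n)) = M.eval (y.zip (h n))) : NerodeAt S n x y := by
  intro z hz
  have hyz : (y ++ z).length = n := by simpa [← hxy] using hz
  simp only [DFA.eval] at heq
  rw [hM, hM, hz, hyz, List.zip_append_left_of_length_le x z (by rwa [hlen]),
    List.zip_append_left_of_length_le y z (by rwa [hlen, ← hxy]), ← hxy]
  simp only [DFA.mem_accepts, DFA.eval, DFA.evalFrom_of_append, heq]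

theorem exists_finite_agreesWithNerodeAt [Fintype Q] (hlen : ∀ n, (h n).length = n)
    (hM : ∀ x : List α, x ∈ S ↔ x.zip (h x.length) ∈ M.accepts) :
    ∃ s : Setoid (PrefixPair α), Finite (Quotient s) ∧ AgreesWithNerodeAt S s := by
  let reached (p : PrefixPair α) : Set Q :=
    (fun y => M.eval (y.zip (h p.1.2))) '' {y | nerodeSetoid S p.1.2 p.1.1 y}
  refine ⟨Setoid.ker reached, .of_injective _ (Setoid.kerLift_injective reached), ?_⟩
  intro n x y hx _ hxy
  rw [Setoid.ker_def]
  exact (Setoid.image_setOf_eq_iff (nerodeSetoid S n) _ fun c hyc hc =>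
    ⟨hxy.trans hyc.1, nerodeAt_of_eval_eq hlen hM hx (hxy.trans hyc.1) hc⟩).trans
      ⟨And.right, And.intro hxy⟩

end Forward

section Backward

variable {α : Type} (S : Set (List α)) (s : Setoid (PrefixPair α))

open Classical in
noncomputable def classRep (n i : ℕ) (q : Quotient s) : List α :=
  if h : ∃ x : List α, ∃ hx : x.length ≤ n, x.length = i ∧ Quotient.mk s ⟨(x, n), hx⟩ = q
  then h.choose else []

noncomputable def adviceStep (n i : ℕ) (q : Quotient s) (a : α) : Quotient s × Prop :=
  let y := classRep s n i q ++ [a]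
  if hy : y.length ≤ n then (Quotient.mk s ⟨(y, n), hy⟩, y ∈ S) else (q, False)

noncomputable def classAdvice (n : ℕ) : List (Quotient s → α → Quotient s × Prop) :=
  (List.range n).map (adviceStep S s n)

-- `classRep s n 0 q = []` for every `q`, so the start class is never read.
def classDFA : DFA (α × (Quotient s → α → Quotient s × Prop)) (Quotient s × Prop) where
  step st p := p.2 st.1 p.1
  start := (Quotient.mk s ⟨([], 0), le_rfl⟩, [] ∈ S)
  accept := {st | st.2}

def Tracks (n : ℕ) (x : List α) (st : Quotient s × Prop) : Prop :=
  (classRep s n x.length st.1).length = x.length ∧ NerodeAt S n x (classRep s n x.length st.1) ∧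
    (x.length = n → (st.2 ↔ x ∈ S))

variable {S s}

theorem classRep_zero (n : ℕ) (q : Quotient s) : classRep s n 0 q = [] := by
  unfold classRep
  split_ifs with h
  · exact List.eq_nil_of_length_eq_zero h.choose_spec.2.1
  · rfl

theorem tracks_mk (hs : AgreesWithNerodeAt S s) {n : ℕ} {y : List α} (hy : y.length ≤ n) :
    Tracks S s n y (Quotient.mk s ⟨(y, n), hy⟩, y ∈ S) := by
  have h : ∃ r : List α, ∃ hr : r.length ≤ n, r.length = y.length ∧
      Quotient.mk s ⟨(r, n), hr⟩ = Quotient.mk s ⟨(y, n), hy⟩ := ⟨y, hy, rfl, rfl⟩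
  obtain ⟨hr, hlen, hmk⟩ := h.choose_spec
  have hrep : classRep s n y.length (Quotient.mk s ⟨(y, n), hy⟩) = h.choose := dif_pos h
  refine ⟨?_, ?_, fun _ => Iff.rfl⟩ <;> dsimp only <;> rw [hrep]
  exacts [hlen, ((hs n _ y hr hy hlen).mp (Quotient.exact hmk)).symm hlen]

theorem tracks_start (n : ℕ) : Tracks S s n [] (classDFA S s).start := by
  simp only [Tracks, List.length_nil, classRep_zero, true_and]
  exact ⟨.refl n [], fun _ => Iff.rfl⟩

theorem Tracks.of_nerodeAt {n : ℕ} {x y : List α} {st : Quotient s × Prop}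
    (hst : Tracks S s n y st) (hxy : NerodeAt S n x y) (hlen : x.length = y.length) :
    Tracks S s n x st := by
  obtain ⟨hrep, hner, hmem⟩ := hst
  rw [Tracks, hlen]
  exact ⟨hrep, hxy.trans hlen hner, fun hn => (hmem hn).trans (hxy.mem_iff (hlen.trans hn)).symm⟩

theorem Tracks.append_singleton (hs : AgreesWithNerodeAt S s) {n : ℕ} {x : List α}
    {st : Quotient s × Prop} (hst : Tracks S s n x st) (hxn : x.length < n) (a : α) :
    Tracks S s n (x ++ [a]) (adviceStep S s n x.length st.1 a) := by
  obtain ⟨hlen, hner, -⟩ := hst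
  set r := classRep s n x.length st.1
  have hra : (r ++ [a]).length ≤ n := by
    simp only [List.length_append, List.length_singleton, hlen]; omega
  have hstep : adviceStep S s n x.length st.1 a =
      (Quotient.mk s ⟨(r ++ [a], n), hra⟩, r ++ [a] ∈ S) := dif_pos hra
  rw [hstep]
  exact (tracks_mk hs hra).of_nerodeAt (hner.append [a]) (by simp [hlen])

theorem tracks_eval_zip_classAdvice (hs : AgreesWithNerodeAt S s) {n : ℕ} (x : List α)
    (hx : x.length ≤ n) : Tracks S s n x ((classDFA S s).eval (x.zip (classAdvice S s n))) := by
  induction x using List.reverseRecOn with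
  | nil => exact tracks_start n
  | append_singleton x a ih =>
    have hxn : x.length < n := by
      simp only [List.length_append, List.length_singleton] at hx; omega
    have hzip : (x ++ [a]).zip (classAdvice S s n) =
        x.zip (classAdvice S s n) ++ [(a, adviceStep S s n x.length)] := by
      rw [List.zip_append_singleton_of_length_lt x a (by simpa [classAdvice] using hxn)]
      simp [classAdvice]
    rw [hzip, DFA.eval_append_singleton]
    exact (ih hxn.le).append_singleton hs hxn a

theorem inREGn_of_agreesWithNerodeAt [Finite α] [Finite (Quotient s)]
    (hs : AgreesWithNerodeAt S s) : InREGn S := by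
  refine ⟨_, Fintype.ofFinite _, classAdvice S s, fun n => by simp [classAdvice],
    _, Fintype.ofFinite _, classDFA S s, fun x => ?_⟩
  exact ((tracks_eval_zip_classAdvice hs x le_rfl).2.2 rfl).symm

end Backward

theorem stmt0 (Alp : Type) [Fintype Alp] (S : Set (List Alp)) :
    InREGn S ↔
      ∃ s : Setoid {p : List Alp × ℕ // p.1.length ≤ p.2},
        Finite (Quotient s) ∧
        ∀ (n : ℕ) (x y : List Alp) (hx : x.length ≤ n) (hy : y.length ≤ n),
          x.length = y.length →
          (s.r ⟨(x, n), hx⟩ ⟨(y, n), hy⟩ ↔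
            ∀ z : List Alp, (x ++ z).length = n → ((x ++ z) ∈ S ↔ (y ++ z) ∈ S)) := by
  constructor
  · rintro ⟨Γ, _, h, hlen, Q, _, M, hM⟩
    exact exists_finite_agreesWithNerodeAt hlen hM
  · rintro ⟨s, _, hs⟩
    exact inREGn_of_agreesWithNerodeAt hs
end

section
/- Let A be a language over a finite alphabet Σ that belongs to 1C=LIN/lin. Then there exists a positive integer m such that for all n ≥ 1, all ℓ ≤ n−1, and every z ∈ Σ^ℓ, letting A_{n,z} = {w ∈ Σ^{n−ℓ} : wz ∈ A}, there exists a subset S ⊆ A_{n,z} with |S| ≤ m such that for every y ∈ Σ^ℓ: if wy ∈ A for every w ∈ S, then xy ∈ A for every x ∈ A_{n,z}. -/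
open scoped BigOperators

/-! Fix `n` and cut the advice string `h n` after position `n - ℓ`. Reading `¢[w//·]` leaves
the automaton in a state distribution `π_w ∈ ℚ^Q`, and since `π_w` sums to one, the condition
`p_acc([wy//h n]) = 1/2` is linear in `π_w`: it says `π_w ⬝ c_y = 0` for a vector `c_y`
depending only on `y`. Choosing `S ⊆ A_{n,z}` so that `{π_w : w ∈ S}` is a basis of the span
of `{π_w : w ∈ A_{n,z}}` gives `|S| ≤ |Q|`, and orthogonality to `c_y` on `S` propagates to
the whole span. -/

open Module Submodule Matrix

theorem exists_finset_card_le_finrank_image_subset_span {ι K V : Type*} [DivisionRing K]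
    [AddCommGroup V] [Module K V] [FiniteDimensional K V] (v : ι → V) (s : Set ι) :
    ∃ t : Finset ι, ↑t ⊆ s ∧ t.card ≤ finrank K V ∧ v '' s ⊆ span K (v '' t) := by
  obtain ⟨b, hbs, -, hspan, hli⟩ :=
    exists_linearIndepOn_extension (linearIndepOn_empty K v) (Set.empty_subset s)
  have : Finite b := hli.finite
  lift b to Finset ι using b.toFinite
  refine ⟨b, hbs, ?_, hspan⟩
  simpa using hli.fintype_card_le_finrank

theorem exists_finset_card_le_forall_dotProduct_eq_zero {ι n K : Type*} [Fintype n] [Field K]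
    (v : ι → n → K) (s : Set ι) :
    ∃ t : Finset ι, ↑t ⊆ s ∧ t.card ≤ Fintype.card n ∧
      ∀ c : n → K, (∀ i ∈ t, v i ⬝ᵥ c = 0) → ∀ i ∈ s, v i ⬝ᵥ c = 0 := by
  obtain ⟨t, hts, hcard, hspan⟩ := exists_finset_card_le_finrank_image_subset_span (K := K) v s
  refine ⟨t, hts, by simpa using hcard, fun c hc i hi => ?_⟩
  have hker : span K (v '' t) ≤ LinearMap.ker ((dotProductBilin K K).flip c) :=
    span_le.mpr <| Set.image_subset_iff.mpr fun j hj => by simpa using hc j hj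
  simpa using hker (hspan ⟨i, hi, rfl⟩)

theorem List.zip_append_eq_zip_take_append_zip_drop {α β : Type*} (w y : List α) (l : List β) :
    (w ++ y).zip l = w.zip (l.take w.length) ++ y.zip (l.drop w.length) := by
  induction w generalizing l with
  | nil => simp
  | cons a w ih => cases l <;> simp [ih]

attribute [local instance] PFA.fin PFA.dec

namespace PFA

variable {Λ : Type} (M : PFA Λ)

def wordMat (u : List Λ) : Matrix M.Q M.Q ℚ := (u.map M.mat).prod

def stateVec (u : List Λ) : M.Q → ℚ := (Pi.single M.start 1 ᵥ* M.matC) ᵥ* M.wordMat u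

def acceptVec (u : List Λ) : M.Q → ℚ :=
  M.wordMat u *ᵥ M.matD *ᵥ fun q => if q ∈ M.final then 1 else 0

theorem foldl_vecMul_mat (u : List Λ) (v : M.Q → ℚ) :
    u.foldl (fun v σ => v ᵥ* M.mat σ) v = v ᵥ* M.wordMat u := by
  induction u generalizing v with
  | nil => simp [wordMat]
  | cons σ u ih => simp [ih, wordMat, vecMul_vecMul]

theorem accProb_append (u v : List Λ) :
    M.accProb (u ++ v) = M.stateVec u ⬝ᵥ M.acceptVec v := by
  simp only [accProb, foldl_vecMul_mat, stateVec, acceptVec, wordMat, List.map_append,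
    List.prod_append, ← vecMul_vecMul, dotProduct_mulVec]
  simp [dotProduct]

theorem mat_mem_rowStochastic (σ : Λ) : M.mat σ ∈ rowStochastic ℚ M.Q :=
  mem_rowStochastic_iff_sum.mpr ⟨M.nonnegMat σ, M.rowMat σ⟩

theorem stateVec_dotProduct_one (u : List Λ) : M.stateVec u ⬝ᵥ 1 = 1 := by
  have hC : M.matC ∈ rowStochastic ℚ M.Q := mem_rowStochastic_iff_sum.mpr ⟨M.nonnegC, M.rowC⟩
  have hW : M.wordMat u ∈ rowStochastic ℚ M.Q :=
    Submonoid.list_prod_mem _ (by simpa using fun σ _ => M.mat_mem_rowStochastic σ)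
  refine vecMul_dotProduct_one_eq_one_rowStochastic hW
    (vecMul_dotProduct_one_eq_one_rowStochastic hC ?_)
  simp [dotProduct_one]

theorem accProb_append_eq_half_iff (u v : List Λ) :
    M.accProb (u ++ v) = 1 / 2 ↔ M.stateVec u ⬝ᵥ (M.acceptVec v - (1 / 2 : ℚ) • 1) = 0 := by
  rw [accProb_append, dotProduct_sub, dotProduct_smul, stateVec_dotProduct_one, sub_eq_zero,
    smul_eq_mul, mul_one]

end PFA

theorem stmt2_general (Alp : Type) (A : Set (List Alp)) (hA : InOneCeqLin A) :
    ∃ m : ℕ, 0 < m ∧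
      ∀ n ℓ : ℕ, 1 ≤ n → ℓ ≤ n - 1 → ∀ z : List Alp, z.length = ℓ →
        ∃ S : Finset (List Alp),
          (∀ w ∈ S, w.length = n - ℓ ∧ w ++ z ∈ A) ∧ S.card ≤ m ∧
          ∀ y : List Alp, y.length = ℓ → (∀ w ∈ S, w ++ y ∈ A) →
            ∀ x : List Alp, x.length = n - ℓ → x ++ z ∈ A → x ++ y ∈ A := by
  obtain ⟨Γ, -, h, hlen, M, hM⟩ := hA
  refine ⟨Fintype.card M.Q, Fintype.card_pos_iff.mpr ⟨M.start⟩, ?_⟩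
  intro n ℓ _ hℓ z _
  set k := n - ℓ
  have hmem : ∀ w y : List Alp, w.length = k → y.length = ℓ →
      (w ++ y ∈ A ↔ M.stateVec (w.zip ((h n).take k)) ⬝ᵥ
        (M.acceptVec (y.zip ((h n).drop k)) - (1 / 2 : ℚ) • 1) = 0) := by
    intro w y hw hy
    have hwy : (w ++ y).length = n := by simp only [List.length_append, hw, hy]; omega
    rw [hM, hwy, List.zip_append_eq_zip_take_append_zip_drop, hw,
      PFA.accProb_append_eq_half_iff]
  obtain ⟨S, hSsub, hScard, hS⟩ := exists_finset_card_le_forall_dotProduct_eq_zero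
    (fun w => M.stateVec (w.zip ((h n).take k))) {w | w.length = k ∧ w ++ z ∈ A}
  refine ⟨S, fun w hw => hSsub hw, hScard, fun y hy hSy x hx hxz => ?_⟩
  rw [hmem x y hx hy]
  exact hS _ (fun w hw => (hmem w y (hSsub hw).1 hy).1 (hSy w hw)) x ⟨hx, hxz⟩

theorem stmt2 (Alp : Type) [Fintype Alp] (A : Set (List Alp)) (hA : InOneCeqLin A) :
    ∃ m : ℕ, 0 < m ∧
      ∀ n ℓ : ℕ, 1 ≤ n → ℓ ≤ n - 1 → ∀ z : List Alp, z.length = ℓ →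
        ∃ S : Finset (List Alp),
          (∀ w ∈ S, w.length = n - ℓ ∧ w ++ z ∈ A) ∧ S.card ≤ m ∧
          ∀ y : List Alp, y.length = ℓ → (∀ w ∈ S, w ++ y ∈ A) →
            ∀ x : List Alp, x.length = n - ℓ → x ++ z ∈ A → x ++ y ∈ A :=
  stmt2_general Alp A hA
end

section
/- The language Dup of duplicated strings belongs to 1C=LIN/lin; that is, there exist a finite advice alphabet Γ, an advice function h : ℕ → Γ* with |h(n)| = n, and a rational 1pfa M over the alphabet {0,1} × Γ such that for every x ∈ {0,1}*: x ∈ Dup if and only if p_acc([x//h(|x|)]) = 1/2. -/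
open scoped BigOperators

/-!
With advice `0^⌈n/2⌉ 1^⌊n/2⌋` the automaton splits its input as `x = a ++ b` and reads `a` and
`b` into two counters, in which a bit string `w` leaves the weight `c(w) / 4 ^ (|w| + 1)`, where
`c(w) = 1 + 2·(binary value of w)` is odd. At the end the first counter accepts, the second
rejects and all remaining mass is split evenly, so `p_acc = 1/2 + (weight a - weight b) / 2`.
Since `c(w)` is odd, `c(w) / 4 ^ |w|` determines `|w|` and then `w`, so `p_acc = 1/2` exactly when
`a = b`, which under this split is exactly `x ∈ Dup`.
-/

open Matrix

lemma List.zip_replicate_length_self {α β : Type*} (l : List α) (c : β) :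
    l.zip (List.replicate l.length c) = l.map (·, c) := by
  induction l with
  | nil => rfl
  | cons x l ih => simp [List.replicate_succ, ih]

lemma List.zip_append_replicate_length {α β : Type*} (l₁ l₂ : List α) (c d : β) :
    (l₁ ++ l₂).zip (List.replicate l₁.length c ++ List.replicate l₂.length d) =
      l₁.map (·, c) ++ l₂.map (·, d) := by
  rw [List.zip_append (List.length_replicate ..).symm, List.zip_replicate_length_self,
    List.zip_replicate_length_self]

lemma Matrix.foldl_vecMul_dotProduct_one_of_mem_rowStochastic {R n ι : Type*} [Fintype n]
    [DecidableEq n] [Semiring R] [PartialOrder R] [IsOrderedRing R] {f : ι → Matrix n n R}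
    (hf : ∀ i, f i ∈ rowStochastic R n) (l : List ι) {v : n → R} (hv : v ⬝ᵥ 1 = 1) :
    l.foldl (fun w i => w ᵥ* f i) v ⬝ᵥ 1 = 1 := by
  induction l generalizing v with
  | nil => exact hv
  | cons i l ih => exact ih (vecMul_dotProduct_one_eq_one_rowStochastic (hf i) hv)

lemma Nat.eq_of_odd_mul_four_pow_eq {m n i j : ℕ} (hm : Odd m) (hn : Odd n)
    (h : m * 4 ^ i = n * 4 ^ j) : i = j := by
  wlog hij : i ≤ j generalizing m n i j
  · exact (this hn hm h.symm (le_of_not_ge hij)).symm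
  obtain ⟨k, rfl⟩ := Nat.exists_eq_add_of_le hij
  have hm' : m = n * 4 ^ k :=
    Nat.eq_of_mul_eq_mul_right (pow_pos four_pos i) (by rw [h]; ring)
  cases k with
  | zero => rfl
  | succ k =>
    rw [hm', Nat.odd_mul, Nat.odd_pow_iff k.succ_ne_zero] at hm
    exact absurd hm.2 (by decide)

def oddCode (a : List Bool) : ℕ := Nat.ofDigits 2 (1 :: a.map Bool.toNat)

lemma oddCode_eq (a : List Bool) : oddCode a = 1 + 2 * Nat.ofDigits 2 (a.map Bool.toNat) :=
  Nat.ofDigits_cons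

lemma odd_oddCode (a : List Bool) : Odd (oddCode a) :=
  ⟨_, by rw [oddCode_eq, add_comm]⟩

lemma oddCode_inj_of_length_eq {a b : List Bool} (hl : a.length = b.length)
    (h : oddCode a = oddCode b) : a = b := by
  have hdigit (l : List Bool) : ∀ d ∈ 1 :: l.map Bool.toNat, d < 2 := by
    simp only [List.mem_cons, List.mem_map]
    rintro d (rfl | ⟨s, -, rfl⟩)
    exacts [one_lt_two, Bool.toNat_lt s]
  have hdigits := Nat.ofDigits_inj_of_len_eq one_lt_two (by simpa using hl) (hdigit a) (hdigit b) h
  simp only [List.cons.injEq, true_and] at hdigits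
  exact List.map_injective_iff.2 (fun s t hst => by cases s <;> cases t <;> simp_all) hdigits

lemma oddCode_div_four_pow_injective :
    Function.Injective fun a : List Bool => (oddCode a : ℚ) / 4 ^ a.length := by
  intro a b h
  have hcross : oddCode a * 4 ^ b.length = oddCode b * 4 ^ a.length := by
    have : (4 : ℚ) ^ a.length ≠ 0 := by positivity
    have : (4 : ℚ) ^ b.length ≠ 0 := by positivity
    field_simp at h
    rw [mul_comm (oddCode b)]
    exact_mod_cast h
  have hl := (Nat.eq_of_odd_mul_four_pow_eq (odd_oddCode a) (odd_oddCode b) hcross).symm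
  rw [hl] at hcross
  exact oddCode_inj_of_length_eq hl (Nat.eq_of_mul_eq_mul_right (by positivity) hcross)

namespace Dup

def startMat : Matrix (Fin 5) (Fin 5) ℚ := Matrix.of fun _ => ![1/4, 1/4, 1/4, 1/4, 0]

/- States `0` and `1` are the counters of the first and the second half (advice `false` and
`true`), `2` and `3` are their sources, whose mass halves at every step of their half, and `4` collects the
rest. -/
def readMat : Bool × Bool → Matrix (Fin 5) (Fin 5) ℚ
  | (t, false) =>
    !![1/4, 0, 0, 0, 3/4;
       0, 1, 0, 0, 0;
       t.toNat/2, 0, 1/2, 0, (1 - t.toNat)/2;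
       0, 0, 0, 1, 0;
       0, 0, 0, 0, 1]
  | (t, true) =>
    !![1, 0, 0, 0, 0;
       0, 1/4, 0, 0, 3/4;
       0, 0, 1, 0, 0;
       0, t.toNat/2, 0, 1/2, (1 - t.toNat)/2;
       0, 0, 0, 0, 1]

def endMat : Matrix (Fin 5) (Fin 5) ℚ :=
  !![1, 0, 0, 0, 0;
     0, 1, 0, 0, 0;
     1/2, 1/2, 0, 0, 0;
     1/2, 1/2, 0, 0, 0;
     1/2, 1/2, 0, 0, 0]

lemma startMat_mem_rowStochastic : startMat ∈ rowStochastic ℚ (Fin 5) := by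
  rw [mem_rowStochastic_iff_sum]
  refine ⟨fun i j => ?_, fun i => ?_⟩
  · fin_cases j <;> norm_num [startMat]
  · norm_num [startMat, Fin.sum_univ_succ]

lemma readMat_mem_rowStochastic (σ : Bool × Bool) : readMat σ ∈ rowStochastic ℚ (Fin 5) := by
  obtain ⟨t, _ | _⟩ := σ <;> rw [mem_rowStochastic_iff_sum] <;>
    refine ⟨fun i j => ?_, fun i => ?_⟩ <;> cases t <;> fin_cases i <;> (try fin_cases j) <;>
    simp [readMat, Fin.sum_univ_five] <;> norm_num

lemma endMat_mem_rowStochastic : endMat ∈ rowStochastic ℚ (Fin 5) := by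
  rw [mem_rowStochastic_iff_sum]
  refine ⟨fun i j => ?_, fun i => ?_⟩ <;> fin_cases i <;> (try fin_cases j) <;>
    simp [endMat, Fin.sum_univ_five] <;> norm_num

lemma vecMul_readMat_false (t : Bool) (A B U V R : ℚ) :
    ![A, B, U, V, R] ᵥ* readMat (t, false) =
      ![A / 4 + t.toNat * U / 2, B, U / 2, V, 3 * A / 4 + (1 - t.toNat) * U / 2 + R] := by
  ext j; fin_cases j <;> simp [readMat, vecMul, dotProduct, Fin.sum_univ_five] <;> ring

lemma vecMul_readMat_true (t : Bool) (A B U V R : ℚ) :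
    ![A, B, U, V, R] ᵥ* readMat (t, true) =
      ![A, B / 4 + t.toNat * V / 2, U, V / 2, 3 * B / 4 + (1 - t.toNat) * V / 2 + R] := by
  ext j; fin_cases j <;> simp [readMat, vecMul, dotProduct, Fin.sum_univ_five] <;> ring

lemma vecMul_endMat_zero {v : Fin 5 → ℚ} (hv : v ⬝ᵥ 1 = 1) :
    (v ᵥ* endMat) 0 = 1 / 2 + (v 0 - v 1) / 2 := by
  simp [endMat, vecMul, dotProduct, Fin.sum_univ_five] at hv ⊢
  linarith

lemma foldl_readMat_false (a : List Bool) (A B U V R : ℚ) : ∃ R',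
    (a.map (·, false)).foldl (fun v σ => v ᵥ* readMat σ) ![A, B, U, V, R] =
      ![(A + 2 * U * Nat.ofDigits 2 (a.map Bool.toNat)) / 4 ^ a.length, B, U / 2 ^ a.length, V,
        R'] := by
  induction a generalizing A U R with
  | nil => exact ⟨R, by simp [Nat.ofDigits]⟩
  | cons t a ih =>
    obtain ⟨R', h⟩ := ih (A / 4 + t.toNat * U / 2) (U / 2) (3 * A / 4 + (1 - t.toNat) * U / 2 + R)
    refine ⟨R', ?_⟩
    rw [List.map_cons, List.foldl_cons, vecMul_readMat_false, h]
    ext j; fin_cases j <;> simp [Nat.ofDigits, pow_succ] <;> ring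

lemma foldl_readMat_true (b : List Bool) (A B U V R : ℚ) : ∃ R',
    (b.map (·, true)).foldl (fun v σ => v ᵥ* readMat σ) ![A, B, U, V, R] =
      ![A, (B + 2 * V * Nat.ofDigits 2 (b.map Bool.toNat)) / 4 ^ b.length, U, V / 2 ^ b.length,
        R'] := by
  induction b generalizing B V R with
  | nil => exact ⟨R, by simp [Nat.ofDigits]⟩
  | cons t b ih =>
    obtain ⟨R', h⟩ := ih (B / 4 + t.toNat * V / 2) (V / 2) (3 * B / 4 + (1 - t.toNat) * V / 2 + R)
    refine ⟨R', ?_⟩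
    rw [List.map_cons, List.foldl_cons, vecMul_readMat_true, h]
    ext j; fin_cases j <;> simp [Nat.ofDigits, pow_succ] <;> ring

def pfa : PFA (Bool × Bool) where
  Q := Fin 5
  fin := inferInstance
  dec := inferInstance
  start := 4
  final := {0}
  matC := startMat
  matD := endMat
  mat := readMat
  nonnegC _ _ := nonneg_of_mem_rowStochastic startMat_mem_rowStochastic
  nonnegD _ _ := nonneg_of_mem_rowStochastic endMat_mem_rowStochastic
  nonnegMat σ _ _ := nonneg_of_mem_rowStochastic (readMat_mem_rowStochastic σ)
  rowC := sum_row_of_mem_rowStochastic startMat_mem_rowStochastic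
  rowD := sum_row_of_mem_rowStochastic endMat_mem_rowStochastic
  rowMat σ := sum_row_of_mem_rowStochastic (readMat_mem_rowStochastic σ)

lemma accProb_pfa (a b : List Bool) :
    pfa.accProb (a.map (·, false) ++ b.map (·, true)) =
      1 / 2 + ((oddCode a : ℚ) / 4 ^ a.length - oddCode b / 4 ^ b.length) / 8 := by
  have hacc (z : List (Bool × Bool)) : pfa.accProb z =
      (z.foldl (fun v σ => v ᵥ* readMat σ) (Pi.single 4 1 ᵥ* startMat) ᵥ* endMat) 0 :=
    Finset.sum_singleton _ _
  have hstart : Pi.single 4 1 ᵥ* startMat = ![1/4, 1/4, 1/4, 1/4, 0] := by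
    ext j; simp [startMat]
  obtain ⟨R₁, h₁⟩ := foldl_readMat_false a (1/4) (1/4) (1/4) (1/4) 0
  obtain ⟨R₂, h₂⟩ := foldl_readMat_true b _ _ _ _ R₁
  have hmass := foldl_vecMul_dotProduct_one_of_mem_rowStochastic readMat_mem_rowStochastic
    (a.map (·, false) ++ b.map (·, true)) (v := ![1/4, 1/4, 1/4, 1/4, 0])
    (by norm_num [dotProduct, Fin.sum_univ_succ])
  rw [List.foldl_append, h₁, h₂] at hmass
  rw [hacc, hstart, List.foldl_append, h₁, h₂, vecMul_endMat_zero hmass]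
  simp [oddCode_eq, Nat.coe_ofDigits]
  ring

def advice (n : ℕ) : List Bool := List.replicate ((n + 1) / 2) false ++ List.replicate (n / 2) true

lemma length_advice (n : ℕ) : (advice n).length = n := by
  simp only [advice, List.length_append, List.length_replicate]
  omega

lemma advice_length_append {a b : List Bool} (h₁ : b.length ≤ a.length)
    (h₂ : a.length ≤ b.length + 1) :
    advice (a ++ b).length = List.replicate a.length false ++ List.replicate b.length true := by
  simp only [advice, List.length_append]
  congr 2 <;> omega

lemma append_mem_dup_iff {a b : List Bool} (h₁ : b.length ≤ a.length)
    (h₂ : a.length ≤ b.length + 1) : a ++ b ∈ Dup ↔ a = b := by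
  constructor
  · rintro ⟨w, hw⟩
    have hlen : a.length = w.length := by
      have := congrArg List.length hw
      simp only [List.length_append] at this
      omega
    exact (List.append_inj hw hlen).1.trans (List.append_inj hw hlen).2.symm
  · rintro rfl
    exact ⟨a, rfl⟩

end Dup

theorem stmt4 : InOneCeqLin Dup := by
  refine ⟨Bool, inferInstance, Dup.advice, Dup.length_advice, Dup.pfa, fun x => ?_⟩
  obtain ⟨a, b, rfl, h₁, h₂⟩ : ∃ a b : List Bool,
      x = a ++ b ∧ b.length ≤ a.length ∧ a.length ≤ b.length + 1 :=
    ⟨x.take ((x.length + 1) / 2), x.drop ((x.length + 1) / 2), (List.take_append_drop _ _).symm,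
      by simp only [List.length_take, List.length_drop]; omega,
      by simp only [List.length_take, List.length_drop]; omega⟩
  rw [Dup.append_mem_dup_iff h₁ h₂, Dup.advice_length_append h₁ h₂,
    List.zip_append_replicate_length, Dup.accProb_pfa, ← oddCode_div_four_pow_injective.eq_iff]
  constructor <;> intro h <;> linarith
end

section
/- Every language belongs to 1C=LIN/Rlin: for every language A over a finite alphabet Σ, there exist a finite advice alphabet Γ, a rational 1pfa M over the alphabet Σ × Γ, and, for each n ∈ ℕ, a probability distribution D_n on Γ^n such that for every n and every x ∈ Σ^n: x ∈ A if and only if Σ_{y ∈ Γ^n} D_n(y) · p_acc([x//y]) = 1/2. -/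
open scoped BigOperators

/-!
The advice is a uniformly random guess `w ∈ (Option Alp)^n` with the bit `[w ∈ A]` written on
every cell. The automaton checks whether the guess is the input `x`: if not, it accepts with
probability `1/2`; if so, it accepts with probability `1/2` when the bit is set and `0` otherwise.
Only the single guess `w = x` can move the average acceptance probability away from `1/2`, and it
does so exactly when `x ∉ A`. Guesses range over `Option Alp` so that there is at least one guess
of every length, even when `Alp` is empty.
-/

open Matrix

namespace PFA

section WeightedDFA

variable {Λ Q σ : Type}

def funMatrix [DecidableEq Q] (f : Q → Q) : Matrix Q Q ℚ :=
  Matrix.of fun i j => if f i = j then 1 else 0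

lemma funMatrix_row [DecidableEq Q] (f : Q → Q) (i : Q) :
    funMatrix f i = Pi.single (f i) 1 := by
  ext j
  simp [funMatrix, Pi.single_apply, eq_comm]

lemma funMatrix_nonneg [DecidableEq Q] (f : Q → Q) (i j : Q) : 0 ≤ funMatrix f i j := by
  simp only [funMatrix, of_apply]
  split_ifs <;> norm_num

lemma sum_funMatrix_row [Fintype Q] [DecidableEq Q] (f : Q → Q) (i : Q) :
    ∑ j, funMatrix f i j = 1 := by
  simp [funMatrix_row]

lemma foldl_vecMul_funMatrix [Fintype Q] [DecidableEq Q] (f : Q → Λ → Q) (x : List Λ) (q : Q) :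
    x.foldl (fun v a => v ᵥ* funMatrix (f · a)) (Pi.single q 1) = Pi.single (x.foldl f q) 1 := by
  induction x generalizing q with
  | nil => rfl
  | cons a x ih => simp only [List.foldl_cons, single_one_vecMul, row, funMatrix_row, ih]

/-- `none` is an accepting sink, entered from `some s` with probability `w s`. -/
def endMatrix [DecidableEq σ] (w : σ → ℚ) : Matrix (Option σ) (Option σ) ℚ :=
  Matrix.of fun
    | none, j => if j = none then 1 else 0
    | some s, none => w s
    | some s, some t => if s = t then 1 - w s else 0

lemma sum_endMatrix_row [Fintype σ] [DecidableEq σ] (w : σ → ℚ) (i : Option σ) :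
    ∑ j, endMatrix w i j = 1 := by
  cases i <;> simp [Fintype.sum_option, endMatrix]

def ofWeightedDFA [Fintype σ] [DecidableEq σ] (δ : σ → Λ → σ) (s₀ : σ) (w : σ → ℚ)
    (hw₀ : ∀ s, 0 ≤ w s) (hw₁ : ∀ s, w s ≤ 1) : PFA Λ where
  Q := Option σ
  fin := inferInstance
  dec := inferInstance
  start := some s₀
  final := {none}
  matC := 1
  matD := endMatrix w
  mat a := funMatrix fun q => q.map (δ · a)
  nonnegC i j := by
    rw [one_apply]
    split_ifs <;> simp
  nonnegD
    | none, j => by simp only [endMatrix, of_apply]; split_ifs <;> simp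
    | some s, none => hw₀ s
    | some s, some t => by
        simp only [endMatrix, of_apply]
        split_ifs <;> linarith [hw₁ s]
  nonnegMat a := funMatrix_nonneg _
  rowC i := by
    show ∑ j, (1 : Matrix (Option σ) (Option σ) ℚ) i j = 1
    simp [one_apply]
  rowD := sum_endMatrix_row w
  rowMat a i := sum_funMatrix_row _ i

lemma accProb_ofWeightedDFA [Fintype σ] [DecidableEq σ] (δ : σ → Λ → σ) (s₀ : σ) (w : σ → ℚ)
    (hw₀ : ∀ s, 0 ≤ w s) (hw₁ : ∀ s, w s ≤ 1) (x : List Λ) :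
    (ofWeightedDFA δ s₀ w hw₀ hw₁).accProb x = w (x.foldl δ s₀) := by
  have hrun : ∀ s, x.foldl (fun q a => q.map (δ · a)) (some s) = some (x.foldl δ s) := by
    induction x with
    | nil => simp
    | cons a x ih => simpa using fun s => ih (δ s a)
  show ∑ q ∈ {none}, (x.foldl (fun v a => v ᵥ* funMatrix fun q => q.map (δ · a))
    (Pi.single (some s₀) 1 ᵥ* 1) ᵥ* endMatrix w) q = _
  rw [Finset.sum_singleton, vecMul_one,
    foldl_vecMul_funMatrix (fun (q : Option σ) a => q.map (δ · a)), hrun, single_one_vecMul]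
  simp [row, endMatrix]

end WeightedDFA

end PFA

section UniformPushforward

variable {α β Γ : Type} [Fintype α]

open Classical in
noncomputable def uniformPushforward (e : α → β) (b : β) : ℝ :=
  ∑ a, if e a = b then (Fintype.card α : ℝ)⁻¹ else 0

lemma sum_uniformPushforward_mul [Fintype β] (e : α → β) (f : β → ℝ) :
    ∑ b, uniformPushforward e b * f b = (Fintype.card α : ℝ)⁻¹ * ∑ a, f (e a) := by
  classical
  simp only [uniformPushforward, Finset.sum_mul, ite_mul, zero_mul, Finset.mul_sum]
  rw [Finset.sum_comm]
  simp

lemma isDist_uniformPushforward [Nonempty α] [Fintype Γ] {n : ℕ} (e : α → List.Vector Γ n) :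
    IsDist (uniformPushforward e) := by
  refine ⟨fun y => Finset.sum_nonneg fun a _ => by positivity, ?_⟩
  simpa using sum_uniformPushforward_mul e 1

end UniformPushforward

lemma Fintype.sum_eq_card_nsmul_iff {ι M : Type} [Fintype ι] [AddCommGroup M] {f : ι → M}
    {i₀ : ι} {v : M} (h : ∀ i ≠ i₀, f i = v) :
    ∑ i, f i = Fintype.card ι • v ↔ f i₀ = v := by
  rw [← sub_eq_zero, ← Finset.card_univ, ← Finset.sum_const, ← Finset.sum_sub_distrib,
    Finset.sum_eq_single i₀ (fun i _ hi => sub_eq_zero.2 (h i hi)) (by simp), sub_eq_zero]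

section GuessChecker

open Classical

variable {Alp : Type}

/-- The state records whether the guess has matched the input so far, and the last bit read. -/
noncomputable def guessStep : Bool × Bool → Alp × (Option Alp × Bool) → Bool × Bool
  | (m, _), (a, g, b) => (m && decide (g = some a), b)

def guessWeight (s : Bool × Bool) : ℚ :=
  if s = (true, false) then 0 else 1 / 2

lemma foldl_guessStep (m β₀ β : Bool) (x : List Alp) (ws : List (Option Alp))
    (hlen : x.length = ws.length) :
    (x.zip (ws.map (·, β))).foldl guessStep (m, β₀)
      = (m && decide (x.map some = ws), if x = [] then β₀ else β) := by
  induction x generalizing ws m β₀ with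
  | nil => simp [List.length_eq_zero_iff.mp hlen.symm]
  | cons a x ih =>
    obtain _ | ⟨g, ws⟩ := ws
    · simp at hlen
    · simp [guessStep, ih _ _ _ (Nat.succ_injective hlen), Bool.and_assoc, eq_comm]

noncomputable def guessChecker (A : Set (List Alp)) : PFA (Alp × (Option Alp × Bool)) :=
  PFA.ofWeightedDFA guessStep (true, decide ([] ∈ A)) guessWeight
    (fun s => by unfold guessWeight; split_ifs <;> norm_num)
    (fun s => by unfold guessWeight; split_ifs <;> norm_num)

noncomputable def encodeGuess (A : Set (List Alp)) {n : ℕ} (w : List.Vector (Option Alp) n) :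
    List.Vector (Option Alp × Bool) n :=
  w.map (·, decide (w.toList.reduceOption ∈ A))

lemma accProb_guessChecker_encodeGuess (A : Set (List Alp)) (x : List Alp)
    (w : List.Vector (Option Alp) x.length) :
    (guessChecker A).accProb (x.zip (encodeGuess A w).toList)
      = if x.map some = w.toList then (if x ∈ A then 1 / 2 else 0) else 1 / 2 := by
  rw [guessChecker, PFA.accProb_ofWeightedDFA, encodeGuess, List.Vector.toList_map,
    foldl_guessStep _ _ _ _ _ (by simp)]
  by_cases hw : x.map some = w.toList
  · rw [← hw]
    rcases x with _ | ⟨a, x⟩ <;> simp [guessWeight, List.reduceOption]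
  · simp [hw, guessWeight]

end GuessChecker

theorem stmt7 (Alp : Type) [Fintype Alp] (A : Set (List Alp)) :
    ∃ (Γ : Type) (iΓ : Fintype Γ),
      letI := iΓ
      ∃ (M : PFA (Alp × Γ)) (D : (n : ℕ) → List.Vector Γ n → ℝ),
        (∀ n, IsDist (D n)) ∧
        ∀ (n : ℕ) (x : List Alp), x.length = n →
          (x ∈ A ↔
            ∑ y : List.Vector Γ n, D n y * (M.accProb (x.zip y.toList) : ℝ) = 1 / 2) := by
  refine ⟨Option Alp × Bool, inferInstance, guessChecker A,
    fun n => uniformPushforward (encodeGuess A (n := n)),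
    fun n => isDist_uniformPushforward _, ?_⟩
  rintro n x rfl
  let xGuess : List.Vector (Option Alp) x.length := ⟨x.map some, List.length_map _⟩
  have hcard : (Fintype.card (List.Vector (Option Alp) x.length) : ℝ) ≠ 0 :=
    Nat.cast_ne_zero.2 Fintype.card_ne_zero
  have hwrong (w) (hw : w ≠ xGuess) :
      ((guessChecker A).accProb (x.zip (encodeGuess A w).toList) : ℝ) = 1 / 2 := by
    have : x.map some ≠ w.toList := fun h => hw (List.Vector.eq _ _ h.symm)
    simp [accProb_guessChecker_encodeGuess, this]
  rw [sum_uniformPushforward_mul, inv_mul_eq_iff_eq_mul₀ hcard, ← nsmul_eq_mul,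
    Fintype.sum_eq_card_nsmul_iff hwrong, accProb_guessChecker_encodeGuess, if_pos (by rfl)]
  split_ifs with hx <;> norm_num [hx]
end

section
/- For every rational 1pfa N over a product alphabet Σ × Γ and every family {D_n}_{n∈ℕ} of probability distributions D_n on Γ^n, there exist a finite alphabet Δ, a DFA M over the alphabet Σ × Δ, and a family {D̃_n}_{n∈ℕ} of probability distributions D̃_n on Δ^n such that for every n ≥ 1 and every x ∈ Σ^n: Pr_{w∼D̃_n}[M accepts [x//w]] = Σ_{y ∈ Γ^n} D_n(y) · p_acc(N, [x//y]). In other words, a 1pfa with randomized advice can be simulated by a deterministic finite automaton with (enlarged) randomized advice achieving exactly the same acceptance probabilities. -/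
open scoped BigOperators

/-!
A row of a rational stochastic matrix `A` whose entries have denominators dividing `d` is sampled
exactly by a deterministic function of one uniform coin from `Fin d`: split `Fin d` into blocks of
sizes `d * A a b`. So the random choices of the 1pfa can be put on the advice as uniform coins,
independent of the original advice, and a DFA reading them follows one run of the 1pfa; averaging
over the coins gives exactly the acceptance probability. Each advice symbol carries three coins;
the first symbol also pays for the `¢`-step and the `$`-step, whose coin is stored in the state
until the end, which is why `n ≥ 1` is needed.
-/

open Finset Matrix

attribute [local instance] PFA.fin PFA.dec

instance List.Vector.instNonempty {α : Type*} [Nonempty α] {n : ℕ} :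
    Nonempty (List.Vector α n) :=
  ⟨.replicate n (Classical.arbitrary α)⟩

def List.Vector.consEquiv (α : Type*) (n : ℕ) : α × List.Vector α n ≃ List.Vector α (n + 1) where
  toFun p := p.1 ::ᵥ p.2
  invFun v := (v.head, v.tail)
  left_inv p := by simp
  right_inv v := v.cons_head_tail

def List.Vector.zipEquiv (α β : Type*) (n : ℕ) :
    List.Vector α n × List.Vector β n ≃ List.Vector (α × β) n where
  toFun p := List.Vector.zipWith Prod.mk p.1 p.2
  invFun v := (v.map Prod.fst, v.map Prod.snd)
  left_inv p := by
    ext1 <;> apply List.Vector.toList_injective <;>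
      simp only [List.Vector.toList_map, List.Vector.zipWith_toList, ← List.zip_eq_zipWith]
    exacts [List.map_fst_zip (by simp), List.map_snd_zip (by simp)]
  right_inv v := by
    apply List.Vector.toList_injective
    simpa only [List.Vector.zipWith_toList, List.Vector.toList_map, ← List.zip_eq_zipWith,
      List.unzip_eq_map] using List.zip_unzip v.toList

theorem List.Vector.zipEquiv_toList {α β : Type*} {n : ℕ} (y : List.Vector α n)
    (r : List.Vector β n) : (zipEquiv α β n (y, r)).toList = y.toList.zip r.toList := by
  simp [zipEquiv, List.Vector.zipWith_toList, List.zip_eq_zipWith]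

theorem List.Vector.zipEquiv_map_fst {α β : Type*} {n : ℕ} (y : List.Vector α n)
    (r : List.Vector β n) : (zipEquiv α β n (y, r)).map Prod.fst = y :=
  congrArg Prod.fst ((zipEquiv α β n).symm_apply_apply (y, r))

theorem List.map_prodAssoc_symm_zip_zip {α β γ : Type*} (x : List α) (y : List β) (r : List γ) :
    (x.zip (y.zip r)).map (Equiv.prodAssoc α β γ).symm = (x.zip y).zip r := by
  induction x generalizing y r with
  | nil => rfl
  | cons a x ih => cases y <;> cases r <;> simp [ih]

theorem DFA.zip_zip_mem_comap_prodAssoc_symm {α β γ σ : Type*} (M : DFA ((α × β) × γ) σ)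
    (x : List α) (y : List β) (r : List γ) :
    x.zip (y.zip r) ∈ (M.comap (Equiv.prodAssoc α β γ).symm).accepts ↔
      (x.zip y).zip r ∈ M.accepts := by
  rw [DFA.accepts_comap]
  show (x.zip (y.zip r)).map _ ∈ M.accepts ↔ _
  rw [List.map_prodAssoc_symm_zip_zip]

theorem List.foldl_vecMul_eq_vecMul_prod {ι S 𝕜 : Type*} [Fintype ι] [DecidableEq ι]
    [Semiring 𝕜] (M : S → Matrix ι ι 𝕜) (w : List S) (v : ι → 𝕜) :
    w.foldl (fun v σ => v ᵥ* M σ) v = v ᵥ* (w.map M).prod := by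
  induction w generalizing v with
  | nil => simp
  | cons σ w ih => rw [List.foldl_cons, ih, vecMul_vecMul, List.map_cons, List.prod_cons]

theorem Rat.exists_natCast_eq_mul_of_den_dvd {q : ℚ} (hq : 0 ≤ q) {d : ℕ} (hd : q.den ∣ d) :
    ∃ m : ℕ, (m : ℚ) = d * q := by
  obtain ⟨k, rfl⟩ := hd
  obtain ⟨n, hn⟩ := Int.eq_ofNat_of_zero_le (Rat.num_nonneg.2 hq)
  have hqn : q * q.den = n := by rw [Rat.mul_den_eq_num, hn, Int.cast_natCast]
  exact ⟨k * n, by push_cast; rw [← hqn]; ring⟩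

section Sampler

variable {𝕜 : Type*} [CommSemiring 𝕜] {α β γ R R' : Type*} [Fintype β] [Fintype γ]
  [Fintype R] [Fintype R']

/-- For a uniformly random coin `r : R`, the value `f a r` has law `A a`. -/
def IsSampler (A : Matrix α β 𝕜) (f : α → R → β) : Prop :=
  ∀ (φ : β → 𝕜) (a : α), ∑ r, φ (f a r) = Fintype.card R * (A *ᵥ φ) a

theorem isSampler_one [DecidableEq β] : IsSampler (1 : Matrix β β 𝕜) fun b (_ : R) => b := by
  intro φ b
  simp

namespace IsSampler

variable {A : Matrix α β 𝕜} {B : Matrix β γ 𝕜} {f : α → R → β} {g : β → R' → γ}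

theorem comp (hf : IsSampler A f) (hg : IsSampler B g) :
    IsSampler (A * B) fun a (r : R × R') => g (f a r.1) r.2 := by
  intro φ a
  simp only [Fintype.sum_prod_type, hg φ, ← mul_sum]
  rw [hf, ← mulVec_mulVec, Fintype.card_prod, Nat.cast_mul, mul_left_comm, mul_assoc]

theorem comp_equiv (hf : IsSampler A f) (e : R' ≃ R) : IsSampler A fun a r => f a (e r) := by
  intro φ a
  rw [e.sum_comp fun r => φ (f a r), hf, Fintype.card_congr e]

theorem comp_fst [DecidableEq β] (hf : IsSampler A f) :
    IsSampler A fun a (r : R × R') => f a r.1 := by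
  simpa using hf.comp (isSampler_one (R := R'))

end IsSampler

theorem exists_isSampler [Fintype α] (A : Matrix α β ℚ) (hA : ∀ a b, 0 ≤ A a b)
    (hA1 : ∀ a, ∑ b, A a b = 1) : ∃ d, 0 < d ∧ ∃ f : α → Fin d → β, IsSampler A f := by
  obtain ⟨d, hd, hdvd⟩ : ∃ d, 0 < d ∧ ∀ a b, (A a b).den ∣ d :=
    ⟨∏ p : α × β, (A p.1 p.2).den, prod_pos fun p _ => (A p.1 p.2).den_pos,
      fun a b => dvd_prod_of_mem _ (mem_univ (a, b))⟩
  choose m hm using fun a b => Rat.exists_natCast_eq_mul_of_den_dvd (hA a b) (hdvd a b)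
  have hcard (a : α) : Fintype.card (Σ b, Fin (m a b)) = d := by
    simp only [Fintype.card_sigma, Fintype.card_fin]
    exact_mod_cast (by simp [hm, ← mul_sum, hA1] : ((∑ b, m a b : ℕ) : ℚ) = d)
  let e a := (Fintype.equivFinOfCardEq (hcard a)).symm
  refine ⟨d, hd, fun a r => (e a r).1, fun φ a => ?_⟩
  rw [(e a).sum_comp fun p => φ p.1, Fintype.sum_sigma]
  simp [hm, mulVec, dotProduct, mul_sum, mul_assoc]

def coinRun {S Q : Type*} (g : S → Q → R → Q) (q : Q) (l : List (S × R)) : Q :=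
  l.foldl (fun q p => g p.1 q p.2) q

theorem isSampler_coinRun {S Q : Type*} [Fintype Q] [DecidableEq Q] {A : S → Matrix Q Q 𝕜}
    {g : S → Q → R → Q} (hg : ∀ σ, IsSampler (A σ) (g σ)) (z : List S) :
    IsSampler (z.map A).prod fun q (r : List.Vector R z.length) => coinRun g q (z.zip r.toList) := by
  induction z with
  | nil => intro φ q; simp [coinRun]
  | cons σ z ih =>
    have hrun (q : Q) (r : List.Vector R (z.length + 1)) :
        coinRun g q ((σ :: z).zip r.toList) = coinRun g (g σ q r.head) (z.zip r.tail.toList) := by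
      conv_lhs => rw [← List.Vector.cons_head_tail r]
      rfl
    show IsSampler _ fun q (r : List.Vector R (z.length + 1)) => _
    rw [List.map_cons, List.prod_cons, funext₂ hrun]
    exact ((hg σ).comp ih).comp_equiv (List.Vector.consEquiv R z.length).symm

end Sampler

theorem PFA.accProb_eq_mulVec {S : Type} (N : PFA S) (w : List S) :
    N.accProb w =
      ((N.matC * (w.map N.mat).prod * N.matD) *ᵥ fun q => if q ∈ N.final then 1 else 0) N.start := by
  rw [← one_mul ((_ *ᵥ _) N.start), ← single_dotProduct, dotProduct_mulVec, PFA.accProb,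
    List.foldl_vecMul_eq_vecMul_prod, vecMul_vecMul, vecMul_vecMul, mul_assoc]
  simp [dotProduct]

section Simulation

variable {S Q RC RM RD : Type*} (q₀ : Q) (F : Finset Q) (gC : Q → RC → Q) (gM : S → Q → RM → Q)
  (gD : Q → RD → Q)

/-- Of the coins `(s, c, t)` read with a symbol, `c` samples the `¢`-step (first symbol only), `s`
the step on the symbol, and the first `t` is kept to sample the `$`-step at the end. -/
def simDFA : DFA (S × (RM × RC × RD)) (Option (Q × RD)) where
  step st p := match st with
    | none => some (gM p.1 (gC q₀ p.2.2.1) p.2.1, p.2.2.2)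
    | some (q, t) => some (gM p.1 q p.2.1, t)
  start := none
  accept := {st | st.elim False fun qt => gD qt.1 qt.2 ∈ F}

theorem simDFA_evalFrom_some (q : Q) (t : RD) (l : List (S × (RM × RC × RD))) :
    (simDFA q₀ F gC gM gD).evalFrom (some (q, t)) l =
      some (coinRun (fun σ q r => gM σ q r.1) q l, t) := by
  induction l generalizing q with
  | nil => rfl
  | cons p l ih => exact ih _

theorem cons_mem_simDFA_accepts (σ : S) (r : RM × RC × RD) (l : List (S × (RM × RC × RD))) :
    (σ, r) :: l ∈ (simDFA q₀ F gC gM gD).accepts ↔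
      gD (coinRun (fun σ q r => gM σ q r.1) (gM σ (gC q₀ r.2.1) r.1) l) r.2.2 ∈ F := by
  rw [DFA.mem_accepts, DFA.eval, DFA.evalFrom_cons]
  exact (simDFA_evalFrom_some q₀ F gC gM gD _ _ l).symm ▸ Iff.rfl

/-- The coins of an advice string, in the order in which `simDFA` consumes them. -/
def simDFACoinEquiv (n : ℕ) :
    List.Vector (RM × RC × RD) (n + 1) ≃ ((RC × RM) × List.Vector (RM × RC × RD) n) × RD where
  toFun r := (((r.head.2.1, r.head.1), r.tail), r.head.2.2)
  invFun p := (p.1.1.2, p.1.1.1, p.2) ::ᵥ p.1.2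
  left_inv r := r.cons_head_tail
  right_inv p := by simp

open Classical in
theorem card_filter_simDFA_accepts {𝕜 : Type*} [CommSemiring 𝕜] [Fintype Q] [DecidableEq Q]
    [Fintype RC] [Fintype RM] [Fintype RD] {MC MD : Matrix Q Q 𝕜} {M : S → Matrix Q Q 𝕜}
    (hC : IsSampler MC gC) (hM : ∀ σ, IsSampler (M σ) (gM σ)) (hD : IsSampler MD gD)
    {n : ℕ} (w : List S) (hw : w.length = n) (hw₀ : w ≠ []) :
    (#{r : List.Vector (RM × RC × RD) n | w.zip r.toList ∈ (simDFA q₀ F gC gM gD).accepts} : 𝕜) =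
      Fintype.card (List.Vector (RM × RC × RD) n) *
        ((MC * (w.map M).prod * MD) *ᵥ fun q => if q ∈ F then 1 else 0) q₀ := by
  obtain ⟨σ, z, rfl⟩ := List.exists_cons_of_ne_nil hw₀
  obtain rfl : z.length + 1 = n := hw
  have h := ((((hC.comp (hM σ)).comp (isSampler_coinRun (fun σ => (hM σ).comp_fst) z)).comp
    hD).comp_equiv (simDFACoinEquiv z.length)) (fun q => if q ∈ F then 1 else 0) q₀
  rw [List.map_cons, List.prod_cons, ← mul_assoc, ← h, natCast_card_filter]
  refine sum_congr rfl fun r _ => ?_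
  conv_lhs => rw [← List.Vector.cons_head_tail r, List.Vector.toList_cons, List.zip_cons_cons,
    cons_mem_simDFA_accepts]
  congr 1

end Simulation

noncomputable def withUniformCoins {Γ : Type} (R : Type) [Fintype R] {n : ℕ}
    (D : List.Vector Γ n → ℝ) (v : List.Vector (Γ × R) n) : ℝ :=
  D (v.map Prod.fst) / Fintype.card (List.Vector R n)

section UniformCoins

variable {Γ R : Type} [Fintype Γ] [Fintype R] {n : ℕ} {D : List.Vector Γ n → ℝ}

theorem IsDist.withUniformCoins [Nonempty R] (hD : IsDist D) : IsDist (withUniformCoins R D) := by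
  refine ⟨fun v => div_nonneg (hD.1 _) (Nat.cast_nonneg _), ?_⟩
  have hc : (Fintype.card (List.Vector R n) : ℝ) ≠ 0 := Nat.cast_ne_zero.2 Fintype.card_ne_zero
  rw [← (List.Vector.zipEquiv Γ R n).sum_comp, Fintype.sum_prod_type, ← hD.2]
  simp only [_root_.withUniformCoins, List.Vector.zipEquiv_map_fst, sum_const, card_univ,
    nsmul_eq_mul, mul_div_cancel₀ _ hc]

open Classical in
theorem randAccProb_withUniformCoins {Alp : Type} (L : Language (Alp × (Γ × R)))
    (x : List Alp) :
    randAccProb L (withUniformCoins R D) x =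
      ∑ y, D y * (#{r : List.Vector R n | x.zip (y.toList.zip r.toList) ∈ L} /
        Fintype.card (List.Vector R n)) := by
  unfold randAccProb
  rw [← (List.Vector.zipEquiv Γ R n).sum_comp, Fintype.sum_prod_type]
  refine sum_congr rfl fun y _ => ?_
  simp only [withUniformCoins, List.Vector.zipEquiv_map_fst, List.Vector.zipEquiv_toList,
    ← sum_filter, sum_const, nsmul_eq_mul]
  rw [mul_comm, mul_div_assoc', mul_div_right_comm]
  rfl

end UniformCoins

theorem stmt8 (Alp Γ : Type) [Fintype Alp] [Fintype Γ] (N : PFA (Alp × Γ))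
    (D : (n : ℕ) → List.Vector Γ n → ℝ) (hD : ∀ n, IsDist (D n)) :
    ∃ (Dl : Type) (iDl : Fintype Dl),
      letI := iDl
      ∃ (Q : Type) (_ : Fintype Q) (M : DFA (Alp × Dl) Q)
        (E : (n : ℕ) → List.Vector Dl n → ℝ),
        (∀ n, IsDist (E n)) ∧
        ∀ n : ℕ, 1 ≤ n → ∀ x : List Alp, x.length = n →
          randAccProb M.accepts (E n) x
            = ∑ y : List.Vector Γ n, D n y * (N.accProb (x.zip y.toList) : ℝ) := by
  classical
  obtain ⟨dC, hdC, gC, hgC⟩ := exists_isSampler N.matC N.nonnegC N.rowC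
  obtain ⟨dM, hdM, gM, hgM⟩ := exists_isSampler (Matrix.of fun p : (Alp × Γ) × N.Q => N.mat p.1 p.2)
    (fun p => N.nonnegMat p.1 p.2) fun p => N.rowMat p.1 p.2
  obtain ⟨dD, hdD, gD, hgD⟩ := exists_isSampler N.matD N.nonnegD N.rowD
  let R := Fin dM × Fin dC × Fin dD
  have : Nonempty R := ⟨(⟨0, hdM⟩, ⟨0, hdC⟩, ⟨0, hdD⟩)⟩
  let sim := simDFA N.start N.final gC (fun σ q => gM (σ, q)) gD
  refine ⟨Γ × R, inferInstance, _, inferInstance, sim.comap (Equiv.prodAssoc Alp Γ R).symm,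
    fun n => withUniformCoins R (D n), fun n => (hD n).withUniformCoins, ?_⟩
  rintro n hn x rfl
  refine (randAccProb_withUniformCoins _ x).trans (sum_congr rfl fun y _ => ?_)
  have hcount := card_filter_simDFA_accepts (M := N.mat) (n := x.length) N.start N.final gC
    (fun σ q => gM (σ, q)) gD hgC (fun σ φ q => hgM φ (σ, q)) hgD (x.zip y.toList) (by simp)
    (List.ne_nil_of_length_pos (by simp; omega))
  rw [← N.accProb_eq_mulVec] at hcount
  rw [filter_congr fun r _ => sim.zip_zip_mem_comap_prodAssoc_symm x y.toList r.toList]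
  congr 1
  rw [div_eq_iff (Nat.cast_ne_zero.2 Fintype.card_ne_zero), mul_comm]
  exact_mod_cast hcount
end

section
/- The marked palindrome language Pal_# is not in REG/n: for every finite advice alphabet Γ, every advice function h : ℕ → Γ* with |h(n)| = n, and every DFA M over the alphabet {0,1,#} × Γ, it is not the case that for all x ∈ {0,1,#}*: x ∈ Pal_# if and only if M accepts [x//h(|x|)]. -/
open scoped BigOperators

/-!
A DFA reading `[x//h(n)]` must carry, after the first `m + 1` symbols of an input `w#…` of length
`n = 2m + 1`, everything that decides membership of `w#v` for all `v` of length `m`. When `2 ^ m`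
exceeds the number of states, two different `w ≠ w'` lead to the same state, so the automaton
cannot distinguish `w#w^R ∈ Pal_#` from `w'#w^R ∉ Pal_#`.
-/

theorem List.zip_append_left {α β : Type*} (u v : List α) (y : List β) :
    (u ++ v).zip y = u.zip y ++ v.zip (y.drop u.length) := by
  induction u generalizing y with
  | nil => simp
  | cons a u ih => cases y <;> simp [ih]

theorem DFA.zip_append_mem_accepts_iff_of_eval_eq {α β σ : Type*} (M : DFA (α × β) σ)
    {u u' : List α} (v : List α) (y : List β) (hlen : u.length = u'.length)
    (heval : M.eval (u.zip y) = M.eval (u'.zip y)) :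
    (u ++ v).zip y ∈ M.accepts ↔ (u' ++ v).zip y ∈ M.accepts := by
  simp only [DFA.mem_accepts, DFA.eval, List.zip_append_left, DFA.evalFrom_of_append, hlen]
  rw [← DFA.eval, heval, DFA.eval]

/-- Once the total length `k + l` is fixed, so is the advice, and the DFA state reached after a
prefix of length `k` determines membership for every suffix of length `l`; pigeonhole on states. -/
theorem InREGn.exists_ne_append_mem_iff {α : Type} {S : Set (List α)} (hS : InREGn S) :
    ∃ N : ℕ, ∀ {ι : Type} [Fintype ι] (f : ι → List α) (k l : ℕ), (∀ i, (f i).length = k) →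
      N < Fintype.card ι → ∃ i j, i ≠ j ∧ ∀ v : List α, v.length = l →
        (f i ++ v ∈ S ↔ f j ++ v ∈ S) := by
  obtain ⟨Γ, _, h, -, Q, _, M, hM⟩ := hS
  refine ⟨Fintype.card Q, fun f k l hf hcard => ?_⟩
  obtain ⟨i, j, hij, heval⟩ :=
    Fintype.exists_ne_map_eq_of_card_lt (fun i => M.eval ((f i).zip (h (k + l)))) hcard
  refine ⟨i, j, hij, fun v hv => ?_⟩
  simp only [hM, List.length_append, hf, hv]
  exact M.zip_append_mem_accepts_iff_of_eval_eq v _ ((hf i).trans (hf j).symm) heval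

theorem map_some_append_none_append_mem_palHash (w : List Bool) :
    w.map some ++ [none] ++ w.reverse.map some ∈ PalHash :=
  ⟨w, by simp⟩

theorem eq_of_map_some_append_none_append_mem_palHash {u v : List Bool}
    (huv : u.length = v.length) (h : u.map some ++ [none] ++ v.reverse.map some ∈ PalHash) :
    u = v := by
  obtain ⟨w, hw⟩ := h
  have hlen : u.length = w.length := by
    have := congrArg List.length hw
    simp only [List.length_append, List.length_map, List.length_cons, List.length_reverse,
      List.length_nil] at this
    omega
  have hw' : u.map some ++ [none] ++ v.reverse.map some
      = w.map some ++ [none] ++ w.reverse.map some := by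
    rw [hw, List.append_assoc, List.singleton_append]
  obtain ⟨hu, hv⟩ := List.append_inj hw' (by simp [hlen])
  have hmap := List.map_injective_iff.mpr (Option.some_injective Bool)
  rw [hmap (List.append_inj_left' hu rfl), List.reverse_injective (hmap hv)]

theorem stmt10 : ¬ InREGn PalHash := by
  intro hPal
  obtain ⟨N, hN⟩ := hPal.exists_ne_append_mem_iff
  have hcard : N < Fintype.card (List.Vector Bool N) := by
    simpa using Nat.lt_two_pow_self
  obtain ⟨w, w', hne, hiff⟩ := hN (fun w : List.Vector Bool N => w.toList.map some ++ [none])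
    (N + 1) N (by simp) hcard
  have hmem := (hiff (w.toList.reverse.map some) (by simp)).mp
    (map_some_append_none_append_mem_palHash w.toList)
  exact hne (List.Vector.toList_injective
    (eq_of_map_some_append_none_append_mem_palHash (by simp) hmem).symm)
end

section
/- Both Dup and its complement {0,1}* ∖ Dup belong to REG/Rn, while {0,1}* ∖ Dup does not belong to 1C=LIN/lin. Consequently, REG/Rn ⊄ 1C=LIN/lin and REG/Rn ⊄ co-1C=LIN/lin (where co-1C=LIN/lin consists of the complements of languages in 1C=LIN/lin). -/
open scoped BigOperators

/-!
`Dup` is recognised with randomized advice by a fingerprint test: for `x = u v` with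
`|u| = |v| = m`, the advice consists of a uniformly random `g : Fin m → G` written twice, the
second time negated, and the DFA computes `∑_{u_i = 1} g_i - ∑_{v_i = 1} g_i`, accepting when it
is `0` (and rejecting odd lengths). If `u = v` this always happens; otherwise the map
`g ↦ ∑_{u_i = 1} g_i - ∑_{v_i = 1} g_i` is a surjective homomorphism onto `G`, so it happens
with probability `1 / |G|`, which is `1 / 3` for `G = ZMod 3`. Swapping accepting and rejecting
states handles the complement.

Conversely, suppose a 1pfa with `k` states and advice `h` accepts exactly the non-duplicated
words with probability `1/2`, and put `m = k + 1`. For words `u, v` of length `m`, the acceptance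
probability on `u v` (with advice `h (2m)`) pairs the state vector reached after `u` with the
acceptance vector from `v`, so the `2^m × 2^m` matrix of these probabilities minus `1/2` has rank
at most `k + 1`. But this matrix is diagonal with nonzero diagonal, hence `2^m ≤ m`.
-/

open Finset

lemma append_mem_Dup_iff {u v : List Bool} (h : u.length = v.length) :
    u ++ v ∈ Dup ↔ u = v := by
  refine ⟨fun ⟨w, hw⟩ => ?_, fun huv => ⟨u, huv ▸ rfl⟩⟩
  have hwu : w.length = u.length := by
    have := congrArg List.length hw
    simp only [List.length_append] at this
    omega
  obtain ⟨rfl, rfl⟩ := List.append_inj hw.symm hwu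
  rfl

lemma even_length_of_mem_Dup {x : List Bool} (hx : x ∈ Dup) : Even x.length := by
  obtain ⟨w, rfl⟩ := hx
  simp

lemma mem_Dup_iff_take_eq_drop {x : List Bool} (hn : Even x.length) :
    x ∈ Dup ↔ x.take (x.length / 2) = x.drop (x.length / 2) := by
  have := Nat.even_iff.mp hn
  conv_lhs => rw [← List.take_append_drop (x.length / 2) x]
  exact append_mem_Dup_iff (by simp; omega)

lemma AddMonoidHom.card_ker_mul_card_of_surjective {H G : Type*} [AddGroup H] [Fintype H]
    [AddGroup G] [Fintype G] [DecidableEq G] (f : H →+ G) (hf : Function.Surjective f) :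
    #{h | f h = 0} * Fintype.card G = Fintype.card H := by
  calc #{h | f h = 0} * Fintype.card G = ∑ t : G, #{h | f h = t} := by
        rw [mul_comm, ← smul_eq_mul, ← card_univ, ← sum_const]
        exact sum_congr rfl fun t _ => AddMonoidHom.card_fiber_eq_of_mem_range f (hf 0) (hf t)
    _ = Fintype.card H := (card_eq_sum_card_fiberwise fun h _ => mem_univ (f h)).symm

section UniformAdvice

variable {α Γ Alp : Type} [Fintype α] [Fintype Γ] {n : ℕ}

noncomputable def pushforwardUniform [DecidableEq Γ] (e : α → List.Vector Γ n)
    (y : List.Vector Γ n) : ℝ :=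
  (#{a | e a = y} : ℝ) / Fintype.card α

lemma isDist_pushforwardUniform [DecidableEq Γ] [Nonempty α] (e : α → List.Vector Γ n) :
    IsDist (pushforwardUniform e) := by
  refine ⟨fun y => by unfold pushforwardUniform; positivity, ?_⟩
  have hcard : ∑ y, (#{a | e a = y} : ℝ) = Fintype.card α := by
    exact_mod_cast (card_eq_sum_card_fiberwise (s := univ) (t := univ)
      (fun a _ => mem_univ (e a))).symm
  simp only [pushforwardUniform, ← sum_div, hcard]
  exact div_self (Nat.cast_ne_zero.mpr Fintype.card_ne_zero)

open Classical in
lemma randAccProb_pushforwardUniform [DecidableEq Γ] (L : Language (Alp × Γ))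
    (e : α → List.Vector Γ n) (x : List Alp) :
    randAccProb L (pushforwardUniform e) x =
      (#{a | x.zip (e a).toList ∈ L} : ℝ) / Fintype.card α := by
  have hfib : ∀ y : List.Vector Γ n, #{a ∈ {a | x.zip (e a).toList ∈ L} | e a = y} =
      if x.zip y.toList ∈ L then #{a | e a = y} else 0 := by
    intro y
    split_ifs with hy
    · congr 1; ext a; simp only [mem_filter, mem_univ, true_and]
      exact ⟨And.right, fun h => ⟨by rwa [h], h⟩⟩
    · rw [card_eq_zero, filter_eq_empty_iff]
      simp only [mem_filter_univ]
      rintro a ha rfl; exact hy ha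
  rw [card_eq_sum_card_fiberwise (t := univ) (fun a _ => mem_univ (e a))]
  simp only [hfib, randAccProb, pushforwardUniform, Nat.cast_sum, sum_div, Nat.cast_ite,
    Nat.cast_zero, ite_div, zero_div]
  rfl

lemma randAccProb_compl {L : Set (List (Alp × Γ))} {D : List.Vector Γ n → ℝ} (hD : IsDist D)
    (x : List Alp) : randAccProb Lᶜ D x = 1 - randAccProb L D x := by
  rw [eq_sub_iff_add_eq, randAccProb, randAccProb, ← sum_add_distrib, ← hD.2]
  refine sum_congr rfl fun y _ => ?_
  by_cases hy : x.zip y.toList ∈ L <;> simp [hy]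

end UniformAdvice

lemma InREGRn.compl {Alp : Type} {S : Set (List Alp)} (hS : InREGRn S) : InREGRn Sᶜ := by
  obtain ⟨Γ, _, Q, _, M, ε, hε0, hε, D, hD, hM⟩ := hS
  refine ⟨Γ, inferInstance, Q, inferInstance, Mᶜ, ε, hε0, hε, D, hD, fun n x hx => ?_⟩
  have hcompl : randAccProb (Mᶜ).accepts (D n) x = 1 - randAccProb M.accepts (D n) x :=
    randAccProb_compl (hD n) x
  rw [hcompl]
  obtain ⟨hin, hout⟩ := hM n x hx
  exact ⟨fun h => by linarith [hout h], fun h => by linarith [hin (not_not.mp h)]⟩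

section DupDFA

variable {G : Type} [AddCommGroup G]

variable (G) in
def dupDFA : DFA (Bool × G) (ZMod 2 × G) where
  step s p := (s.1 + 1, if p.1 then s.2 + p.2 else s.2)
  start := 0
  accept := {0}

def maskedSum (l : List (Bool × G)) : G :=
  (l.map fun p => if p.1 then p.2 else 0).sum

lemma dupDFA_evalFrom (s : ZMod 2 × G) (l : List (Bool × G)) :
    (dupDFA G).evalFrom s l = (s.1 + l.length, s.2 + maskedSum l) := by
  induction l generalizing s with
  | nil => simp [maskedSum]
  | cons p l ih =>
    rw [DFA.evalFrom_cons, ih]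
    simp only [dupDFA, maskedSum, List.length_cons, List.map_cons, List.sum_cons, Nat.cast_succ]
    ext
    · ring
    · split_ifs <;> simp [add_assoc]

lemma mem_dupDFA_accepts (l : List (Bool × G)) :
    l ∈ (dupDFA G).accepts ↔ Even l.length ∧ maskedSum l = 0 := by
  rw [DFA.mem_accepts, DFA.eval, dupDFA_evalFrom]
  simp [dupDFA, Prod.ext_iff, ZMod.natCast_eq_zero_iff_even]

def maskedSumHom (m : ℕ) (u : List Bool) : (Fin m → G) →+ G where
  toFun g := ∑ i : Fin m, if u.getD i false then g i else 0
  map_zero' := by simp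
  map_add' g h := by
    rw [← sum_add_distrib]
    exact sum_congr rfl fun i _ => by split_ifs <;> simp

lemma maskedSum_zip_ofFn {m : ℕ} {u : List Bool} (hu : u.length = m) (g : Fin m → G) :
    maskedSum (u.zip (List.ofFn g)) = maskedSumHom m u g := by
  induction u generalizing m with
  | nil => subst hu; simp [maskedSum, maskedSumHom]
  | cons a u ih =>
    subst hu
    rw [List.ofFn_succ, List.zip_cons_cons]
    simp only [maskedSum, List.map_cons, List.sum_cons] at ih ⊢
    rw [ih rfl]
    simp [maskedSumHom, Fin.sum_univ_succ]

lemma maskedSum_append (l l' : List (Bool × G)) :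
    maskedSum (l ++ l') = maskedSum l + maskedSum l' := by
  simp [maskedSum]

/-- The second half of the advice carries `-g`, so that `dupDFA` ends up comparing the two
halves of the input instead of adding them up. -/
def dupAdvice (n : ℕ) (g : Fin (n / 2) → G) : List.Vector G n :=
  ⟨List.ofFn g ++ List.ofFn (-g) ++ List.replicate (n % 2) 0, by simp; omega⟩

lemma zip_dupAdvice_mem_accepts_iff {n : ℕ} {x : List Bool} (hx : x.length = n)
    (g : Fin (n / 2) → G) :
    x.zip (dupAdvice n g).toList ∈ (dupDFA G).accepts ↔
      Even n ∧
        maskedSumHom (n / 2) (x.take (n / 2)) g = maskedSumHom (n / 2) (x.drop (n / 2)) g := by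
  rw [mem_dupDFA_accepts, List.length_zip, List.Vector.toList_length, hx, min_self]
  refine and_congr_right fun hn => ?_
  have hpad : n % 2 = 0 := Nat.even_iff.mp hn
  have htake : (x.take (n / 2)).length = n / 2 := by simp; omega
  have hdrop : (x.drop (n / 2)).length = n / 2 := by simp; omega
  rw [← List.take_append_drop (n / 2) x, dupAdvice, List.Vector.toList_mk, hpad,
    List.replicate_zero, List.append_nil, List.zip_append (by simp [htake]),
    maskedSum_append, maskedSum_zip_ofFn htake, maskedSum_zip_ofFn hdrop, map_neg,
    ← sub_eq_add_neg, sub_eq_zero, List.take_append_drop]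

lemma maskedSumHom_sub_surjective {m : ℕ} {u v : List Bool}
    (hu : u.length = m) (hv : v.length = m) (huv : u ≠ v) :
    Function.Surjective (maskedSumHom m u - maskedSumHom m v : (Fin m → G) →+ G) := by
  obtain ⟨i, hi⟩ : ∃ i : Fin m, u.getD i false ≠ v.getD i false := by
    by_contra! h
    refine huv (List.ext_getElem (hu.trans hv.symm) fun i hiu hiv => ?_)
    simpa [List.getD_eq_getElem, hiu, hiv] using h ⟨i, hu ▸ hiu⟩
  have hsingle : ∀ w : List Bool, ∀ t : G,
      maskedSumHom m w (Pi.single i t) = if w.getD i false then t else 0 := by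
    intro w t
    simp only [maskedSumHom, AddMonoidHom.coe_mk, ZeroHom.coe_mk]
    rw [sum_eq_single i (fun j _ hj => by simp [hj]) (by simp)]
    simp
  intro t
  have hvi := Bool.eq_not_of_ne hi.symm
  cases hui : u.getD i false
  · exact ⟨Pi.single i (-t), by rw [AddMonoidHom.sub_apply, hsingle, hsingle, hvi, hui]; simp⟩
  · exact ⟨Pi.single i t, by rw [AddMonoidHom.sub_apply, hsingle, hsingle, hvi, hui]; simp⟩

end DupDFA

section DupAdvice

variable {G : Type} [AddCommGroup G] [Fintype G] [DecidableEq G] {n : ℕ} {x : List Bool}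

lemma randAccProb_dupDFA_of_mem (hxn : x.length = n) (hx : x ∈ Dup) :
    randAccProb (dupDFA G).accepts (pushforwardUniform (dupAdvice (G := G) n)) x = 1 := by
  subst hxn
  have hn := even_length_of_mem_Dup hx
  rw [randAccProb_pushforwardUniform]
  simp only [zip_dupAdvice_mem_accepts_iff rfl, hn, (mem_Dup_iff_take_eq_drop hn).mp hx, true_and,
    filter_true, card_univ]
  exact div_self (by positivity)

lemma randAccProb_dupDFA_of_not_mem (hxn : x.length = n) (hx : x ∉ Dup) :
    randAccProb (dupDFA G).accepts (pushforwardUniform (dupAdvice (G := G) n)) x ≤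
      (Fintype.card G : ℝ)⁻¹ := by
  rw [randAccProb_pushforwardUniform]
  simp only [zip_dupAdvice_mem_accepts_iff hxn]
  by_cases hn : Even n
  · subst hxn
    have := Nat.even_iff.mp hn
    have hcount := AddMonoidHom.card_ker_mul_card_of_surjective _
      (maskedSumHom_sub_surjective (G := G) (m := x.length / 2) (by simp; omega) (by simp; omega)
        (mt (mem_Dup_iff_take_eq_drop hn).mpr hx))
    simp only [AddMonoidHom.sub_apply, sub_eq_zero] at hcount
    simp only [hn, true_and]
    rw [← hcount, Nat.cast_mul, div_mul_eq_div_div, ← one_div]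
    gcongr
    exact div_self_le_one _
  · simp only [hn, false_and, filter_false, card_empty, Nat.cast_zero, zero_div]
    positivity

end DupAdvice

lemma inREGRn_Dup : InREGRn Dup := by
  refine ⟨ZMod 3, inferInstance, ZMod 2 × ZMod 3, inferInstance, dupDFA (ZMod 3), 1 / 3,
    by norm_num, by norm_num, fun n => pushforwardUniform (dupAdvice n),
    fun n => isDist_pushforwardUniform _, fun n x hxn => ⟨fun hx => ?_, fun hx => ?_⟩⟩
  · rw [randAccProb_dupDFA_of_mem hxn hx]
    norm_num
  · refine (randAccProb_dupDFA_of_not_mem hxn hx).trans ?_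
    simp [ZMod.card]

lemma card_le_card_add_one_of_dotProduct_eq_offDiag {ι Q K : Type*} [Fintype ι]
    [DecidableEq ι] [Fintype Q] [Field K] (V C : ι → Q → K) (c : K)
    (hoff : ∀ i j, i ≠ j → V i ⬝ᵥ C j = c) (hdiag : ∀ i, V i ⬝ᵥ C i ≠ c) :
    Fintype.card ι ≤ Fintype.card Q + 1 := by
  classical
  -- the extra column of `A` and row of `B` subtract `c` from every entry of the product
  let A : Matrix ι (Option Q) K := Matrix.of fun i o => o.elim 1 (V i)
  let B : Matrix (Option Q) ι K := Matrix.of fun o j => o.elim (-c) (C j)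
  have hAB : A * B = Matrix.diagonal fun i => V i ⬝ᵥ C i - c := by
    ext i j
    rw [Matrix.mul_apply, Fintype.sum_option]
    rcases eq_or_ne i j with rfl | hij
    · simp [A, B, dotProduct, sub_eq_neg_add]
    · simp [A, B, Matrix.diagonal_apply_ne _ hij, ← hoff i j hij, dotProduct]
  calc Fintype.card ι = (A * B).rank := by
        rw [hAB, Matrix.rank_diagonal, Fintype.card_subtype_compl]
        simp [sub_eq_zero, hdiag]
    _ ≤ A.rank := Matrix.rank_mul_le_left A B
    _ ≤ Fintype.card (Option Q) := Matrix.rank_le_card_width A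
    _ = Fintype.card Q + 1 := Fintype.card_option

section PFA

open Matrix

attribute [local instance] PFA.fin PFA.dec

namespace PFA

variable {Λ : Type} (M : PFA Λ)

def stateAfter (x : List Λ) : M.Q → ℚ :=
  x.foldl (fun v σ => v ᵥ* M.mat σ) (Pi.single M.start 1 ᵥ* M.matC)

def acceptFrom (x : List Λ) (q : M.Q) : ℚ :=
  ∑ f ∈ M.final, ((x.map M.mat).prod * M.matD) q f

lemma foldl_vecMul (x : List Λ) (v : M.Q → ℚ) :
    x.foldl (fun v σ => v ᵥ* M.mat σ) v = v ᵥ* (x.map M.mat).prod := by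
  induction x generalizing v with
  | nil => simp
  | cons σ x ih => simp [ih, vecMul_vecMul]

lemma accProb_append_s12 (x y : List Λ) :
    M.accProb (x ++ y) = M.stateAfter x ⬝ᵥ M.acceptFrom y := by
  rw [accProb, List.foldl_append, foldl_vecMul, vecMul_vecMul]
  simp only [vecMul, dotProduct, stateAfter, acceptFrom, mul_sum]
  exact sum_comm

end PFA

lemma not_inOneCeqLin_compl_Dup : ¬ InOneCeqLin Dupᶜ := by
  rintro ⟨Γ, -, h, hlen, M, hM⟩
  set m := Fintype.card M.Q + 1
  set y := h (2 * m)
  have hy : y.length = 2 * m := hlen _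
  have hsplit : ∀ u v : List.Vector Bool m, M.accProb ((u.toList ++ v.toList).zip y) =
      M.stateAfter (u.toList.zip (y.take m)) ⬝ᵥ M.acceptFrom (v.toList.zip (y.drop m)) := by
    intro u v
    rw [← M.accProb_append_s12, ← List.zip_append (by simp; omega), List.take_append_drop]
  have hacc : ∀ u v : List.Vector Bool m,
      M.accProb ((u.toList ++ v.toList).zip y) = 1 / 2 ↔ u ≠ v := by
    intro u v
    have := hM (u.toList ++ v.toList)
    rw [List.length_append, u.toList_length, v.toList_length, ← two_mul] at this
    rw [← this, Set.mem_compl_iff, append_mem_Dup_iff (by simp),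
      List.Vector.toList_injective.eq_iff]
  have hcard := card_le_card_add_one_of_dotProduct_eq_offDiag
    (fun u : List.Vector Bool m => M.stateAfter (u.toList.zip (y.take m)))
    (fun v => M.acceptFrom (v.toList.zip (y.drop m))) (1 / 2)
    (fun u v huv => (hsplit u v) ▸ (hacc u v).mpr huv)
    (fun u => (hsplit u u) ▸ fun h => (hacc u u).mp h rfl)
  rw [card_vector, Fintype.card_bool] at hcard
  exact absurd hcard (not_le.mpr Nat.lt_two_pow_self)

end PFA

theorem stmt12 : InREGRn Dup ∧ InREGRn Dupᶜ ∧ ¬ InOneCeqLin Dupᶜ ∧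
    (∃ A : Set (List Bool), InREGRn A ∧ ¬ InOneCeqLin A) ∧
    (∃ A : Set (List Bool), InREGRn A ∧ ¬ InOneCeqLin Aᶜ) :=
  ⟨inREGRn_Dup, inREGRn_Dup.compl, not_inOneCeqLin_compl_Dup,
    ⟨Dupᶜ, inREGRn_Dup.compl, not_inOneCeqLin_compl_Dup⟩,
    ⟨Dup, inREGRn_Dup, not_inOneCeqLin_compl_Dup⟩⟩
end
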